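/- Let M ⊆ ℂⁿ be a subset, p ∈ M, and k a positive integer. If Δ_q(M_k, p) < k, then Δ_q(M, p) = Δ_q(M_k, p). -/

import Mathlib

open Filter Asymptotics Topology

/-- The order of vanishing at `0` of a function `f : ℂ → E`: the supremum of all `k`
such that `f(t) = O(‖t‖^k)` as `t → 0`. -/
noncomputable def vord {E : Type*} [NormedAddCommGroup E] (f : ℂ → E) : ℕ∞ :=
  sSup {m : ℕ∞ | ∃ k : ℕ, m = (k : ℕ∞) ∧ f =O[nhds (0 : ℂ)] fun t => ‖t‖ ^ k}

/-- `γ` is a nonconstant holomorphic curve germ at `p`. -/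
def IsCurveGerm {n : ℕ} (p : Fin n → ℂ) (γ : ℂ → (Fin n → ℂ)) : Prop :=
  AnalyticAt ℂ γ 0 ∧ γ 0 = p ∧ ¬ (∀ᶠ t in nhds (0 : ℂ), γ t = p)

/-- `ν(γ)`: the minimum of the vanishing orders of the components of `γ - p`. -/
noncomputable def curveMult {n : ℕ} (p : Fin n → ℂ) (γ : ℂ → (Fin n → ℂ)) : ℕ∞ :=
  vord (fun t => γ t - p)

/-- Ratio of two extended-natural vanishing orders, as an extended nonnegative real. -/
noncomputable def nuRatio (a b : ℕ∞) : ENNReal := (a : ENNReal) / (b : ENNReal)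

/-- The Taylor polynomial of order `k` of `r` at `p`. -/
noncomputable def taylorPoly {E : Type*} [NormedAddCommGroup E] [NormedSpace ℝ E]
    (r : E → ℝ) (p : E) (k : ℕ) : E → ℝ :=
  fun z => ∑ i ∈ Finset.range (k + 1),
    ((i.factorial : ℝ))⁻¹ • iteratedFDeriv ℝ i r p (fun _ => z - p)

/-- The linear form `z ↦ ∑ⱼ aⱼ (zⱼ - pⱼ)` vanishing at `p`. -/
noncomputable def linForm {n : ℕ} (p : Fin n → ℂ) (a : Fin n → ℂ) : (Fin n → ℂ) → ℂ :=
  fun z => ∑ j, a j * (z j - p j)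

/-- `I(M)`: germs at `p` of smooth real-valued functions vanishing on `M` near `p`
(represented by functions). -/
def smoothVanish {n : ℕ} (M : Set (Fin n → ℂ)) (p : Fin n → ℂ) :
    Set ((Fin n → ℂ) → ℝ) :=
  {r | (∃ U ∈ nhds p, ContDiffOn ℝ (⊤ : ℕ∞) r U) ∧ ∀ᶠ z in nhds p, z ∈ M → r z = 0}

/-- `inf_{φ ∈ (G,w_A)} ν(φ∘γ)/ν(γ)`: the infimum over the ideal generated by the family `G`
of real-valued germs together with the `q-1` linear forms given by the rows of `A`; it is
computed on the generators. -/
noncomputable def idealInfAlong {n m : ℕ} (p : Fin n → ℂ) (G : Set ((Fin n → ℂ) → ℝ))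
    (A : Fin m → Fin n → ℂ) (γ : ℂ → (Fin n → ℂ)) : ENNReal :=
  min (⨅ r ∈ G, nuRatio (vord (r ∘ γ)) (curveMult p γ))
    (⨅ i, nuRatio (vord ((linForm p (A i)) ∘ γ)) (curveMult p γ))

/-- `Δ((G,w_A), p) = sup_γ inf_{φ ∈ (G,w_A)} ν(φ∘γ)/ν(γ)`. -/
noncomputable def DeltaWith {n m : ℕ} (p : Fin n → ℂ) (G : Set ((Fin n → ℂ) → ℝ))
    (A : Fin m → Fin n → ℂ) : ENNReal :=
  ⨆ γ ∈ {γ : ℂ → (Fin n → ℂ) | IsCurveGerm p γ}, idealInfAlong p G A γ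

/-- The D'Angelo `q`-type `Δ_q(G,p) = inf_w Δ((G,w),p)`, the infimum over all collections
of `q-1` linear forms vanishing at `p`. -/
noncomputable def DeltaqSet {n : ℕ} (q : ℕ) (p : Fin n → ℂ)
    (G : Set ((Fin n → ℂ) → ℝ)) : ENNReal :=
  ⨅ A : Fin (q - 1) → Fin n → ℂ, DeltaWith p G A

/-- `Δ_q(M,p)`, the D'Angelo `q`-type of a subset `M ⊆ ℂⁿ` at `p ∈ M`. -/
noncomputable def DeltaqM {n : ℕ} (q : ℕ) (M : Set (Fin n → ℂ)) (p : Fin n → ℂ) : ENNReal :=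
  DeltaqSet q p (smoothVanish M p)

/-- `Δ_q(M_k,p)`, the D'Angelo `q`-type of the ideal generated by the order-`k` Taylor
polynomials at `p` of elements of `I(M)`. -/
noncomputable def DeltaqMk {n : ℕ} (q : ℕ) (M : Set (Fin n → ℂ)) (p : Fin n → ℂ) (k : ℕ) :
    ENNReal :=
  DeltaqSet q p ((fun r => taylorPoly r p k) '' smoothVanish M p)

section AuxVord

variable {E : Type*} [NormedAddCommGroup E]

lemma pow_bigO_pow {j k : ℕ} (hjk : j ≤ k) :
    (fun t : ℂ => ‖t‖ ^ k) =O[nhds (0 : ℂ)] fun t => ‖t‖ ^ j := by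
  apply Asymptotics.IsBigO.of_bound 1
  filter_upwards [Metric.closedBall_mem_nhds (0 : ℂ) one_pos] with t ht
  rw [Metric.mem_closedBall, dist_zero_right] at ht
  simp only [norm_pow, norm_norm, one_mul]
  exact pow_le_pow_of_le_one (norm_nonneg t) ht hjk

lemma bigO_mono {f : ℂ → E} {j k : ℕ} (hjk : j ≤ k)
    (h : f =O[nhds (0 : ℂ)] fun t => ‖t‖ ^ k) : f =O[nhds (0 : ℂ)] fun t => ‖t‖ ^ j :=
  h.trans (pow_bigO_pow hjk)

lemma le_vord {f : ℂ → E} {k : ℕ} (h : f =O[nhds (0 : ℂ)] fun t => ‖t‖ ^ k) :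
    (k : ℕ∞) ≤ vord f := le_sSup ⟨k, rfl, h⟩

lemma vord_le {f : ℂ → E} {a : ℕ} (h : ¬ f =O[nhds (0 : ℂ)] fun t => ‖t‖ ^ (a + 1)) :
    vord f ≤ (a : ℕ∞) := by
  apply sSup_le
  rintro m ⟨j, rfl, hj⟩
  by_contra hc
  push_neg at hc
  have haj : a < j := by exact_mod_cast hc
  exact h (bigO_mono haj hj)

lemma bigO_of_vord_eq {f : ℂ → E} {m : ℕ} (hm : vord f = (m : ℕ∞)) (h1 : 1 ≤ m) :
    f =O[nhds (0 : ℂ)] fun t => ‖t‖ ^ m := by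
  by_contra h
  obtain ⟨a, rfl⟩ : ∃ a, m = a + 1 := ⟨m - 1, by omega⟩
  have h2 := vord_le h
  rw [hm] at h2
  have : a + 1 ≤ a := by exact_mod_cast h2
  omega

lemma curve_facts {n : ℕ} {p : Fin n → ℂ} {γ : ℂ → (Fin n → ℂ)} (hγ : IsCurveGerm p γ) :
    ∃ ν : ℕ, 1 ≤ ν ∧ curveMult p γ = (ν : ℕ∞) ∧
      (fun t => γ t - p) =O[nhds (0 : ℂ)] fun t => ‖t‖ ^ ν := by
  obtain ⟨han, h0, hnc⟩ := hγ
  have hf : AnalyticAt ℂ (fun t => γ t - p) 0 := han.sub analyticAt_const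
  have hot : analyticOrderAt (fun t => γ t - p) 0 ≠ ⊤ := fun h =>
    hnc (by filter_upwards [analyticOrderAt_eq_top.mp h] with t ht using sub_eq_zero.mp ht)
  obtain ⟨d, hd⟩ : ∃ d : ℕ, analyticOrderAt (fun t => γ t - p) 0 = (d : ℕ∞) := by
    lift analyticOrderAt (fun t => γ t - p) 0 to ℕ using hot with d hd
    exact ⟨d, rfl⟩
  obtain ⟨g, hg_an, hg0, hfg⟩ := (hf.analyticOrderAt_eq_natCast (n := d)).mp hd
  -- lower bound : big-O with exponent 1
  have hO1 : (fun t => γ t - p) =O[nhds (0 : ℂ)] fun t => ‖t‖ ^ 1 := by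
    have hdiff : DifferentiableAt ℂ (fun t => γ t - p) 0 := hf.differentiableAt
    have h2 := hdiff.hasFDerivAt.isBigO_sub
    have h3 : (fun t : ℂ => γ t - p) =O[nhds (0 : ℂ)] fun t => t - 0 := by
      have he : (fun t : ℂ => (γ t - p) - (γ 0 - p)) = fun t => γ t - p := by
        funext t; rw [h0]; simp
      rwa [he] at h2
    have h4 : (fun t : ℂ => t - 0) =O[nhds (0 : ℂ)] fun t => ‖t‖ ^ 1 := by
      simpa using (Asymptotics.isBigO_refl (fun t : ℂ => t - 0) (nhds 0)).norm_right
    exact h3.trans h4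
  -- the order `d` is not improvable
  have hnotO : ¬ (fun t => γ t - p) =O[nhds (0 : ℂ)] fun t => ‖t‖ ^ (d + 1) := by
    intro hO
    obtain ⟨C, hC⟩ := hO.bound
    have key : ∀ᶠ t in nhdsWithin (0 : ℂ) {(0 : ℂ)}ᶜ, ‖g t‖ ≤ C * ‖t‖ := by
      filter_upwards [eventually_nhdsWithin_of_eventually_nhds hfg,
        eventually_nhdsWithin_of_eventually_nhds hC, self_mem_nhdsWithin] with t h1 h2 ht
      have ht0 : t ≠ 0 := ht
      have hpos : (0 : ℝ) < ‖t‖ ^ d := pow_pos (norm_pos_iff.mpr ht0) d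
      have h1' : ‖γ t - p‖ = ‖t‖ ^ d * ‖g t‖ := by
        rw [h1, norm_smul, sub_zero, norm_pow]
      have hmul : ‖t‖ ^ d * ‖g t‖ ≤ ‖t‖ ^ d * (C * ‖t‖) := by
        rw [← h1']
        calc ‖γ t - p‖ ≤ C * ‖‖t‖ ^ (d + 1)‖ := h2
          _ = ‖t‖ ^ d * (C * ‖t‖) := by
              rw [norm_pow, norm_norm, pow_succ]; ring
      exact le_of_mul_le_mul_left hmul hpos
    haveI : (nhdsWithin (0 : ℂ) {(0 : ℂ)}ᶜ).NeBot := NormedField.nhdsNE_neBot (0 : ℂ)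
    have hg_tendsto : Filter.Tendsto (fun t => ‖g t‖) (nhdsWithin (0 : ℂ) {(0 : ℂ)}ᶜ)
        (nhds ‖g 0‖) :=
      (hg_an.continuousAt.norm.tendsto).mono_left nhdsWithin_le_nhds
    have hlin : Filter.Tendsto (fun t : ℂ => C * ‖t‖) (nhdsWithin (0 : ℂ) {(0 : ℂ)}ᶜ)
        (nhds (C * ‖(0 : ℂ)‖)) := by
      exact ((continuous_const.mul continuous_norm).tendsto 0).mono_left nhdsWithin_le_nhds
    have hle := le_of_tendsto_of_tendsto hg_tendsto hlin key
    simp only [norm_zero, mul_zero] at hle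
    exact hg0 (norm_le_zero_iff.mp hle)
  have hub : vord (fun t => γ t - p) ≤ (d : ℕ∞) := vord_le hnotO
  have hlb : ((1 : ℕ) : ℕ∞) ≤ vord (fun t => γ t - p) := le_vord hO1
  have hne : vord (fun t => γ t - p) ≠ ⊤ := by
    intro h
    rw [h] at hub
    exact absurd hub (by simp)
  obtain ⟨ν, hν⟩ : ∃ ν : ℕ, vord (fun t => γ t - p) = (ν : ℕ∞) := by
    lift vord (fun t => γ t - p) to ℕ using hne with ν hν
    exact ⟨ν, rfl⟩
  have h1ν : 1 ≤ ν := by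
    rw [hν] at hlb
    exact_mod_cast hlb
  exact ⟨ν, h1ν, hν, bigO_of_vord_eq hν h1ν⟩

lemma ratio_min_le {f g : ℂ → ℝ} {ν k : ℕ} (hν : 1 ≤ ν)
    (hfg : (fun t => f t - g t) =O[nhds (0 : ℂ)] fun t => ‖t‖ ^ (ν * (k + 1))) :
    min (nuRatio (vord f) (ν : ℕ∞)) ((k + 1 : ℕ) : ENNReal)
      ≤ min (nuRatio (vord g) (ν : ℕ∞)) ((k + 1 : ℕ) : ENNReal) := by
  rcases le_or_gt ((k + 1 : ℕ) : ENNReal) (nuRatio (vord g) (ν : ℕ∞)) with hc | hc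
  · rw [min_eq_right hc]
    exact min_le_right _ _
  · have hν0 : (((ν : ℕ∞)) : ENNReal) ≠ 0 := by
      simp only [ENat.toENNReal_coe, ne_eq, Nat.cast_eq_zero]
      omega
    have hνt : (((ν : ℕ∞)) : ENNReal) ≠ ⊤ := by simp
    have hlt : ((vord g : ENNReal)) < ((k + 1 : ℕ) : ENNReal) * (((ν : ℕ∞)) : ENNReal) :=
      (ENNReal.div_lt_iff (Or.inl hν0) (Or.inl hνt)).mp hc
    have hlt2 : vord g < (((k + 1) * ν : ℕ) : ℕ∞) := by
      rw [← ENat.toENNReal_lt, ENat.toENNReal_coe, Nat.cast_mul]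
      simpa [ENat.toENNReal_coe] using hlt
    obtain ⟨bn, hbn⟩ : ∃ bn : ℕ, vord g = (bn : ℕ∞) := by
      lift vord g to ℕ using ne_top_of_lt hlt2 with bn hbn
      exact ⟨bn, rfl⟩
    have hbnlt : bn < (k + 1) * ν := by
      rw [hbn] at hlt2
      exact_mod_cast hlt2
    have hfle : vord f ≤ (bn : ℕ∞) := by
      apply vord_le
      intro hO
      have h1 : bn + 1 ≤ ν * (k + 1) := by
        calc bn + 1 ≤ (k + 1) * ν := hbnlt
          _ = ν * (k + 1) := Nat.mul_comm _ _
      have h2 : (fun t => g t) =O[nhds (0 : ℂ)] fun t => ‖t‖ ^ (bn + 1) := by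
        have h3 := hO.sub (bigO_mono h1 hfg)
        simpa using h3
      have h4 := le_vord h2
      rw [hbn] at h4
      have : bn + 1 ≤ bn := by exact_mod_cast h4
      omega
    have hratio : nuRatio (vord f) (ν : ℕ∞) ≤ nuRatio (vord g) (ν : ℕ∞) := by
      unfold nuRatio
      apply ENNReal.div_le_div_right
      have hle2 : vord f ≤ vord g := by rw [hbn]; exact hfle
      exact_mod_cast ENat.toENNReal_le.mpr hle2
    exact le_min ((min_le_left _ _).trans hratio) (min_le_right _ _)

lemma ratio_min_eq {f g : ℂ → ℝ} {ν k : ℕ} (hν : 1 ≤ ν)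
    (hfg : (fun t => f t - g t) =O[nhds (0 : ℂ)] fun t => ‖t‖ ^ (ν * (k + 1))) :
    min (nuRatio (vord f) (ν : ℕ∞)) ((k + 1 : ℕ) : ENNReal)
      = min (nuRatio (vord g) (ν : ℕ∞)) ((k + 1 : ℕ) : ENNReal) := by
  refine le_antisymm (ratio_min_le hν hfg) (ratio_min_le hν ?_)
  have := hfg.neg_left
  simpa [neg_sub] using this

end AuxVord

section AuxTaylor

open Set
open scoped Nat

variable {𝕜 : Type*} [NontriviallyNormedField 𝕜] {E F : Type*} [NormedAddCommGroup E]
  [NormedSpace 𝕜 E] [NormedAddCommGroup F] [NormedSpace 𝕜 F]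

lemma fderiv_comp_const_add' (f : E → F) (c x : E) :
    fderiv 𝕜 (fun w => f (c + w)) x = fderiv 𝕜 f (c + x) := by
  by_cases hd : DifferentiableAt 𝕜 f (c + x)
  · have h1 : HasFDerivAt (fun w : E => c + w) (ContinuousLinearMap.id 𝕜 E) x :=
      (hasFDerivAt_id x).const_add c
    have h2 := (hd.hasFDerivAt.comp x h1).fderiv
    simpa [Function.comp_def] using h2
  · have hd2 : ¬ DifferentiableAt 𝕜 (fun w => f (c + w)) x := by
      intro hcomp
      have h3 : DifferentiableAt 𝕜 (fun w : E => w - c) (c + x) :=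
        (differentiable_id.sub_const c) _
      have hg2 : DifferentiableAt 𝕜 (fun w => f (c + w)) ((fun w : E => w - c) (c + x)) := by
        simpa using hcomp
      have h5 := DifferentiableAt.comp (c + x) hg2 h3
      have h6 : ((fun w => f (c + w)) ∘ fun w : E => w - c) = f := by
        funext y
        show f (c + (y - c)) = f y
        congr 1
        abel
      rw [h6] at h5
      exact hd h5
    rw [fderiv_zero_of_not_differentiableAt hd, fderiv_zero_of_not_differentiableAt hd2]

lemma iteratedFDeriv_comp_const_add (f : E → F) (c : E) (i : ℕ) :
    ∀ x : E, iteratedFDeriv 𝕜 i (fun w => f (c + w)) x = iteratedFDeriv 𝕜 i f (c + x) := by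
  induction i with
  | zero =>
    intro x
    ext m
    simp
  | succ i IH =>
    intro x
    ext m
    rw [iteratedFDeriv_succ_apply_left, iteratedFDeriv_succ_apply_left]
    have hfun : iteratedFDeriv 𝕜 i (fun w => f (c + w))
        = fun y => iteratedFDeriv 𝕜 i f (c + y) := funext IH
    rw [hfun, fderiv_comp_const_add' (iteratedFDeriv 𝕜 i f) c x]

lemma iteratedFDerivWithin_eq_iteratedFDeriv_of_contDiffOn {f : E → F} {t s : Set E}
    {N : WithTop ℕ∞} (hf : ContDiffOn 𝕜 N f t) (ht : IsOpen t) (hst : s ⊆ t)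
    (hs : UniqueDiffOn 𝕜 s) {x : E} (hx : x ∈ s) {i : ℕ} (hi : (i : WithTop ℕ∞) ≤ N) :
    iteratedFDerivWithin 𝕜 i f s x = iteratedFDeriv 𝕜 i f x := by
  have H := (hf.ftaylorSeriesWithin ht.uniqueDiffOn).mono hst
  have h1 := H.eq_iteratedFDerivWithin_of_uniqueDiffOn hi hs hx
  rw [← h1]
  exact iteratedFDerivWithin_of_isOpen i ht (hst hx)

lemma taylor_remainder_isBigO {E : Type*} [NormedAddCommGroup E] [NormedSpace ℝ E] [ProperSpace E]
    {r : E → ℝ} {p : E} (k : ℕ) {U : Set E} (hU : U ∈ nhds p) (hr : ContDiffOn ℝ (⊤ : ℕ∞) r U) :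
    (fun z => r z - taylorPoly r p k z) =O[nhds p] fun z => ‖z - p‖ ^ (k + 1) := by
  have hVo : IsOpen (interior U) := isOpen_interior
  set V := interior U with hVdef
  have hpV : p ∈ V := mem_interior_iff_mem_nhds.mpr hU
  have hrV : ContDiffOn ℝ (⊤ : ℕ∞) r V := hr.mono interior_subset
  obtain ⟨δ, hδ0, hδV⟩ : ∃ δ > 0, Metric.closedBall p δ ⊆ V :=
    (Metric.nhds_basis_closedBall.mem_iff).mp (hVo.mem_nhds hpV)
  have hcont : ContinuousOn (iteratedFDeriv ℝ (k + 1) r) V := by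
    have h1 := hrV.continuousOn_iteratedFDerivWithin (m := k + 1) (by exact_mod_cast le_top) hVo.uniqueDiffOn
    exact h1.congr ((iteratedFDerivWithin_of_isOpen (k + 1) hVo).symm)
  obtain ⟨C, hC⟩ := (isCompact_closedBall p δ).exists_bound_of_continuousOn (hcont.mono hδV)
  have hmain : ∀ z ∈ Metric.closedBall p δ,
      ‖r z - taylorPoly r p k z‖ ≤ (C / (k ! : ℝ)) * ‖z - p‖ ^ (k + 1) := by
    intro z hz
    set v := z - p with hv
    have hvδ : ‖v‖ ≤ δ := by rwa [Metric.mem_closedBall, dist_eq_norm] at hz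
    set rt : E → ℝ := fun w => r (p + w) with hrt
    set W : Set E := (fun w => p + w) ⁻¹' V with hWdef
    have hWo : IsOpen W := hVo.preimage (continuous_const.add continuous_id)
    have hrtW : ContDiffOn ℝ (⊤ : ℕ∞) rt W :=
      hrV.comp ((contDiff_const.add contDiff_id).contDiffOn) (fun w hw => hw)
    set L : ℝ →L[ℝ] E := ContinuousLinearMap.smulRight (ContinuousLinearMap.id ℝ ℝ) v with hLdef
    have hLy : ∀ y : ℝ, L y = y • v := fun y => rfl
    set O : Set ℝ := L ⁻¹' W with hOdef
    have hOo : IsOpen O := hWo.preimage L.continuous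
    have hgO : ContDiffOn ℝ (⊤ : ℕ∞) (rt ∘ L) O := hrtW.comp_continuousLinearMap L
    have hballmem : ∀ y : ℝ, y ∈ Icc (0 : ℝ) 1 → p + y • v ∈ Metric.closedBall p δ := by
      intro y hy
      rw [Metric.mem_closedBall, dist_eq_norm]
      have : ‖p + y • v - p‖ = ‖y • v‖ := by rw [add_sub_cancel_left]
      rw [this, norm_smul]
      calc ‖y‖ * ‖v‖ ≤ 1 * δ := by
            apply mul_le_mul _ hvδ (norm_nonneg v) zero_le_one
            rw [Real.norm_eq_abs, abs_of_nonneg hy.1]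
            exact hy.2
        _ = δ := one_mul δ
    have hIccO : Icc (0 : ℝ) 1 ⊆ O := by
      intro y hy
      show L y ∈ W
      rw [hLy]
      show p + y • v ∈ V
      exact hδV (hballmem y hy)
    have hIccud : UniqueDiffOn ℝ (Icc (0 : ℝ) 1) := uniqueDiffOn_Icc one_pos
    have hkey : ∀ i, ∀ y ∈ Icc (0 : ℝ) 1,
        iteratedDerivWithin i (rt ∘ L) (Icc (0 : ℝ) 1) y
          = iteratedFDeriv ℝ i r (p + y • v) (fun _ => v) := by
      intro i y hy
      rw [iteratedDerivWithin_eq_iteratedFDerivWithin]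
      rw [iteratedFDerivWithin_eq_iteratedFDeriv_of_contDiffOn hgO hOo hIccO hIccud hy (by exact_mod_cast le_top)]
      have h2 : iteratedFDeriv ℝ i (rt ∘ L) y = iteratedFDerivWithin ℝ i (rt ∘ L) O y :=
        (iteratedFDerivWithin_eq_iteratedFDeriv_of_contDiffOn hgO hOo (subset_refl O)
          hOo.uniqueDiffOn (hIccO hy) (by exact_mod_cast le_top)).symm
      rw [h2]
      have hLyW : L y ∈ W := hIccO hy
      rw [L.iteratedFDerivWithin_comp_right hrtW hWo.uniqueDiffOn hOo.uniqueDiffOn hLyW (by exact_mod_cast le_top)]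
      rw [ContinuousMultilinearMap.compContinuousLinearMap_apply]
      rw [iteratedFDerivWithin_eq_iteratedFDeriv_of_contDiffOn hrtW hWo (subset_refl W)
        hWo.uniqueDiffOn hLyW (by exact_mod_cast le_top)]
      have h3 := iteratedFDeriv_comp_const_add (𝕜 := ℝ) r p i (L y)
      rw [hrt, h3]
      simp only [hLy, one_smul]
    have hgC : ContDiffOn ℝ ((k : ℕ) + 1) (rt ∘ L) (Icc (0 : ℝ) 1) :=
      (hgO.of_le (by exact_mod_cast le_top)).mono hIccO
    have hbound : ∀ y ∈ Icc (0 : ℝ) 1,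
        ‖iteratedDerivWithin (k + 1) (rt ∘ L) (Icc (0 : ℝ) 1) y‖ ≤ C * ‖v‖ ^ (k + 1) := by
      intro y hy
      rw [hkey (k + 1) y hy]
      calc ‖iteratedFDeriv ℝ (k + 1) r (p + y • v) (fun _ => v)‖
          ≤ ‖iteratedFDeriv ℝ (k + 1) r (p + y • v)‖ * ∏ _i : Fin (k + 1), ‖v‖ :=
            ContinuousMultilinearMap.le_opNorm _ _
        _ ≤ C * ‖v‖ ^ (k + 1) := by
            rw [Finset.prod_const, Finset.card_univ, Fintype.card_fin]
            exact mul_le_mul_of_nonneg_right (hC _ (hballmem y hy))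
              (pow_nonneg (norm_nonneg v) _)
    have hrem := taylor_mean_remainder_bound zero_le_one hgC
      (right_mem_Icc.mpr zero_le_one) hbound
    have he1 : (rt ∘ L) 1 = r z := by
      show r (p + L 1) = r z
      rw [hLy, one_smul, hv, add_sub_cancel]
    have he2 : taylorWithinEval (rt ∘ L) k (Icc (0 : ℝ) 1) 0 1 = taylorPoly r p k z := by
      rw [taylor_within_apply]
      unfold taylorPoly
      apply Finset.sum_congr rfl
      intro i hi
      rw [hkey i 0 (left_mem_Icc.mpr zero_le_one)]
      rw [zero_smul, add_zero]
      simp [hv]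
    rw [he1, he2] at hrem
    calc ‖r z - taylorPoly r p k z‖ ≤ C * ‖v‖ ^ (k + 1) * (1 - 0) ^ (k + 1) / k ! := hrem
      _ = (C / (k ! : ℝ)) * ‖z - p‖ ^ (k + 1) := by
          rw [← hv]; ring
  apply Asymptotics.IsBigO.of_bound (C / (k ! : ℝ))
  filter_upwards [Metric.closedBall_mem_nhds p hδ0] with z hz
  have h1 := hmain z hz
  calc ‖r z - taylorPoly r p k z‖ ≤ (C / (k ! : ℝ)) * ‖z - p‖ ^ (k + 1) := h1
    _ = (C / (k ! : ℝ)) * ‖‖z - p‖ ^ (k + 1)‖ := by rw [norm_pow, norm_norm]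

lemma comp_remainder_isBigO {n : ℕ} {p : Fin n → ℂ} {γ : ℂ → (Fin n → ℂ)}
    (hγan : AnalyticAt ℂ γ 0) (h0 : γ 0 = p)
    {ν : ℕ} (hatt : (fun t => γ t - p) =O[nhds (0 : ℂ)] fun t => ‖t‖ ^ ν)
    {r : (Fin n → ℂ) → ℝ} {k : ℕ} {U : Set (Fin n → ℂ)} (hU : U ∈ nhds p)
    (hr : ContDiffOn ℝ (⊤ : ℕ∞) r U) :
    (fun t => (r ∘ γ) t - ((fun z => taylorPoly r p k z) ∘ γ) t) =O[nhds (0 : ℂ)]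
      fun t => ‖t‖ ^ (ν * (k + 1)) := by
  have h1 := taylor_remainder_isBigO k hU hr
  have htend : Filter.Tendsto γ (nhds 0) (nhds p) := by
    have := hγan.continuousAt.tendsto
    rwa [h0] at this
  have h2 := h1.comp_tendsto htend
  have h3 : (fun t => ‖γ t - p‖) =O[nhds (0 : ℂ)] fun t => ‖t‖ ^ ν := hatt.norm_left
  have h4 := h3.pow (k + 1)
  have h5 : (fun t => ‖γ t - p‖ ^ (k + 1)) =O[nhds (0 : ℂ)]
      fun t => ‖t‖ ^ (ν * (k + 1)) := by
    simpa [pow_mul] using h4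
  exact h2.trans h5

end AuxTaylor

section AuxAssembly

lemma zero_mem_smoothVanish {n : ℕ} (M : Set (Fin n → ℂ)) (p : Fin n → ℂ) :
    (0 : (Fin n → ℂ) → ℝ) ∈ smoothVanish M p :=
  ⟨⟨Set.univ, Filter.univ_mem, by exact contDiffOn_const⟩,
    Filter.Eventually.of_forall fun z _ => rfl⟩

lemma inf_biSup' {α : Type*} (S : Set α) (F : α → ENNReal) (c : ENNReal) :
    (⨆ γ ∈ S, F γ) ⊓ c = ⨆ γ ∈ S, (F γ ⊓ c) := by
  rw [iSup_inf_eq]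
  exact iSup_congr fun γ => iSup_inf_eq _ _

lemma inf_biInf' {α : Type*} {S : Set α} (hS : S.Nonempty) (F : α → ENNReal) (c : ENNReal) :
    (⨅ γ ∈ S, F γ) ⊓ c = ⨅ γ ∈ S, (F γ ⊓ c) := by
  haveI : Nonempty S := hS.to_subtype
  rw [← iInf_subtype'', ← iInf_subtype'' S (fun γ => F γ ⊓ c), iInf_inf]

lemma idealInf_inf_eq {n m : ℕ} {M : Set (Fin n → ℂ)} {p : Fin n → ℂ} (k : ℕ)
    (A : Fin m → Fin n → ℂ) {γ : ℂ → (Fin n → ℂ)} (hγ : IsCurveGerm p γ) :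
    idealInfAlong p (smoothVanish M p) A γ ⊓ ((k + 1 : ℕ) : ENNReal)
      = idealInfAlong p ((fun r => taylorPoly r p k) '' smoothVanish M p) A γ
          ⊓ ((k + 1 : ℕ) : ENNReal) := by
  obtain ⟨ν, hν1, hνeq, hatt⟩ := curve_facts hγ
  set c : ENNReal := ((k + 1 : ℕ) : ENNReal) with hc
  set G := smoothVanish M p with hG
  set Y := ⨅ i, nuRatio (vord ((linForm p (A i)) ∘ γ)) (curveMult p γ) with hY
  set X := ⨅ r ∈ G, nuRatio (vord (r ∘ γ)) (curveMult p γ) with hXdef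
  set X' := ⨅ s ∈ (fun r => taylorPoly r p k) '' G,
      nuRatio (vord (s ∘ γ)) (curveMult p γ) with hX'def
  have hX : X ⊓ c = X' ⊓ c := by
    rw [hXdef, hX'def]
    rw [iInf_image]
    rw [inf_biInf' ⟨0, zero_mem_smoothVanish M p⟩, inf_biInf' ⟨0, zero_mem_smoothVanish M p⟩]
    simp only [hνeq]
    apply iInf_congr
    intro r
    apply iInf_congr
    intro hr
    obtain ⟨⟨U, hU, hrU⟩, -⟩ := hr
    exact ratio_min_eq hν1 (comp_remainder_isBigO hγ.1 hγ.2.1 hatt hU hrU)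
  show min X Y ⊓ c = min X' Y ⊓ c
  rw [inf_inf_distrib_right X Y c,
    inf_inf_distrib_right X' Y c, hX]

lemma DeltaWith_inf_eq {n m : ℕ} (M : Set (Fin n → ℂ)) (p : Fin n → ℂ) (k : ℕ)
    (A : Fin m → Fin n → ℂ) :
    DeltaWith p (smoothVanish M p) A ⊓ ((k + 1 : ℕ) : ENNReal)
      = DeltaWith p ((fun r => taylorPoly r p k) '' smoothVanish M p) A
          ⊓ ((k + 1 : ℕ) : ENNReal) := by
  unfold DeltaWith
  rw [inf_biSup', inf_biSup']
  apply iSup_congr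
  intro γ
  apply iSup_congr
  intro hγ
  exact idealInf_inf_eq k A hγ

end AuxAssembly

/-- If `Δ_q(M_k, p) < k`, then `Δ_q(M, p) = Δ_q(M_k, p)`. -/
theorem Deltaq_eq_DeltaqMk {n : ℕ} (q : ℕ) (hq : 1 ≤ q) (M : Set (Fin n → ℂ))
    (p : Fin n → ℂ) (hp : p ∈ M) (k : ℕ) (hk : 0 < k)
    (hlt : DeltaqMk q M p k < (k : ENNReal)) :
    DeltaqM q M p = DeltaqMk q M p k := by
  have hkc : DeltaqMk q M p k < ((k + 1 : ℕ) : ENNReal) := by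
    refine hlt.trans_le ?_
    exact_mod_cast Nat.le_succ k
  have key : DeltaqM q M p ⊓ ((k + 1 : ℕ) : ENNReal)
      = DeltaqMk q M p k ⊓ ((k + 1 : ℕ) : ENNReal) := by
    unfold DeltaqM DeltaqMk DeltaqSet
    rw [iInf_inf, iInf_inf]
    exact iInf_congr fun A => DeltaWith_inf_eq M p k A
  rcases lt_or_ge (DeltaqM q M p) ((k + 1 : ℕ) : ENNReal) with h | h
  · rwa [inf_eq_left.mpr h.le, inf_eq_left.mpr hkc.le] at key
  · exfalso
    rw [inf_eq_right.mpr h, inf_eq_left.mpr hkc.le] at key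
    rw [key] at hkc
    exact lt_irrefl _ hkc
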